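/- arXiv:1508.01876 — 5 statements merged into one kernel-verified Lean document; each statement's English description precedes it below -/
import Mathlib

section
/- The only integer solution (x,y) of the equation (2x+y)/√(3y²-4y+2) = -(x+2y)/√(3x²-4x+2) is x = y = 0. -/
/-!
Clearing the square roots, `a := 2x + y` and `b := x + 2y` have opposite signs (or both vanish)
and `a² (3x² - 4x + 2) = b² (3y² - 4y + 2)`. The difference of the two sides factors as
`(x - y) (2s (6s² - 8s + 3) - 4p (3s - 1))` with `s = x + y`, `p = x y`. Since `a b = 2s² + p`,
opposite signs force `p < -2s² ≤ 0`, and then for an integer `s` the two terms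
`s (6s² - 8s + 3)` and `2p (3s - 1)` have strictly opposite signs (or `s = 0 ≠ p`), while `x = y`
would make `a b = 9x²` nonnegative.
-/

lemma three_mul_sq_sub_four_mul_add_two_pos {R : Type*} [CommRing R] [LinearOrder R]
    [IsStrictOrderedRing R] (t : R) : 0 < 3 * t ^ 2 - 4 * t + 2 := by
  nlinarith [sq_nonneg (3 * t - 2)]

section SqrtClearing

variable {a b u v : ℝ}

lemma mul_sqrt_eq_neg_of_div_sqrt_eq_neg (hu : 0 < u) (hv : 0 < v)
    (h : a / √v = -(b / √u)) : a * √u = -(b * √v) := by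
  have hsu := Real.sqrt_pos.mpr hu
  have hsv := Real.sqrt_pos.mpr hv
  field_simp at h
  linear_combination h

lemma sq_mul_eq_sq_mul_of_mul_sqrt_eq_neg (hu : 0 ≤ u) (hv : 0 ≤ v)
    (h : a * √u = -(b * √v)) : a ^ 2 * u = b ^ 2 * v := by
  have := congrArg (· ^ 2) h
  simpa only [neg_sq, mul_pow, Real.sq_sqrt hu, Real.sq_sqrt hv] using this

lemma mul_neg_or_of_mul_sqrt_eq_neg (hu : 0 < u) (hv : 0 < v)
    (h : a * √u = -(b * √v)) : a * b < 0 ∨ a = 0 ∧ b = 0 := by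
  have hsu := Real.sqrt_pos.mpr hu
  have hsv := Real.sqrt_pos.mpr hv
  rcases lt_trichotomy b 0 with hb | rfl | hb
  · have ha : 0 < a := pos_of_mul_pos_left (by nlinarith) hsu.le
    exact Or.inl (mul_neg_of_pos_of_neg ha hb)
  · simp only [zero_mul, neg_zero, mul_eq_zero, hsu.ne', or_false] at h
    exact Or.inr ⟨h, rfl⟩
  · have ha : a < 0 := neg_of_mul_neg_left (by nlinarith) hsu.le
    exact Or.inl (mul_neg_of_neg_of_pos ha hb)

end SqrtClearing

lemma mul_cubic_ne_of_two_mul_sq_add_neg (s p : ℤ) (hp : 2 * s ^ 2 + p < 0) :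
    s * (6 * s ^ 2 - 8 * s + 3) ≠ 2 * p * (3 * s - 1) := by
  intro h
  have hq : 0 < 6 * s ^ 2 - 8 * s + 3 := by nlinarith [sq_nonneg (3 * s - 2)]
  rcases lt_trichotomy s 0 with hs | rfl | hs
  · nlinarith [mul_neg_of_neg_of_pos hs hq, mul_pos_of_neg_of_neg (by nlinarith : p < 0)
      (by omega : 3 * s - 1 < 0)]
  · nlinarith
  · nlinarith [mul_pos hs hq, mul_neg_of_neg_of_pos (by nlinarith : p < 0)
      (by omega : 0 < 3 * s - 1)]

lemma sq_mul_ne_sq_mul_of_mul_neg (x y : ℤ) (hneg : (2 * x + y) * (x + 2 * y) < 0) :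
    (2 * x + y) ^ 2 * (3 * x ^ 2 - 4 * x + 2) ≠ (x + 2 * y) ^ 2 * (3 * y ^ 2 - 4 * y + 2) := by
  intro hE
  have hxy : x - y ≠ 0 := by
    intro hxy
    obtain rfl : x = y := by omega
    nlinarith
  have hfactor : (2 * x + y) ^ 2 * (3 * x ^ 2 - 4 * x + 2)
        - (x + 2 * y) ^ 2 * (3 * y ^ 2 - 4 * y + 2)
      = (x - y) * (2 * ((x + y) * (6 * (x + y) ^ 2 - 8 * (x + y) + 3)
          - 2 * (x * y) * (3 * (x + y) - 1))) := by ring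
  rw [hE, sub_self, eq_comm, mul_eq_zero, or_iff_right hxy] at hfactor
  exact mul_cubic_ne_of_two_mul_sq_add_neg (x + y) (x * y) (by nlinarith) (by linarith)

/-- The only integer solution (x,y) of
    (2x+y)/√(3y²-4y+2) = -(x+2y)/√(3x²-4x+2) is x = y = 0. -/
theorem stmt0 (x y : ℤ)
    (h : (2 * (x : ℝ) + y) / Real.sqrt (3 * (y : ℝ)^2 - 4 * y + 2)
       = -(((x : ℝ) + 2 * y) / Real.sqrt (3 * (x : ℝ)^2 - 4 * x + 2))) :
    x = 0 ∧ y = 0 := by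
  have hx := three_mul_sq_sub_four_mul_add_two_pos (x : ℝ)
  have hy := three_mul_sq_sub_four_mul_add_two_pos (y : ℝ)
  have hm := mul_sqrt_eq_neg_of_div_sqrt_eq_neg hx hy h
  have hsq : (2 * x + y) ^ 2 * (3 * x ^ 2 - 4 * x + 2)
      = (x + 2 * y) ^ 2 * (3 * y ^ 2 - 4 * y + 2) := by
    exact_mod_cast sq_mul_eq_sq_mul_of_mul_sqrt_eq_neg hx.le hy.le hm
  rcases mul_neg_or_of_mul_sqrt_eq_neg hx hy hm with hneg | ⟨ha, hb⟩
  · exact absurd hsq (sq_mul_ne_sq_mul_of_mul_neg x y (by exact_mod_cast hneg))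
  · have ha : 2 * x + y = 0 := by exact_mod_cast ha
    have hb : x + 2 * y = 0 := by exact_mod_cast hb
    omega
end

section
/- If integers k, m, n with m, n ≥ 0 satisfy 3k² + 2k + 1 = (2m+1)² and 3k² - 2k + 1 = (2n+1)², then m = n and k = 0. -/
/-- If integers k, m, n with m, n ≥ 0 satisfy 3k²+2k+1 = (2m+1)² and
    3k²-2k+1 = (2n+1)², then m = n and k = 0. -/
theorem stmt1 (k m n : ℤ) (hm : 0 ≤ m) (hn : 0 ≤ n)
    (h1 : 3 * k^2 + 2 * k + 1 = (2 * m + 1)^2)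
    (h2 : 3 * k^2 - 2 * k + 1 = (2 * n + 1)^2) :
    m = n ∧ k = 0 := by
  have hk : k = 0 := by
    by_contra hk0
    have hkpos : 0 < k^2 := by positivity
    have hk2 : 1 ≤ k^2 := hkpos
    set t : ℤ := (2*m+1)*(2*n+1) with ht_def
    have ht : 1 ≤ t := by nlinarith
    have heq : t^2 = (3*k^2+1)^2 - 4*k^2 := by nlinarith [h1, h2]
    have h3 : t ≤ 3*k^2 := by nlinarith [sq_nonneg (t - (3*k^2+1)), sq_nonneg (t + (3*k^2+1))]
    have h4 : 3*k^2 < t := by nlinarith [sq_nonneg (t - 3*k^2), sq_nonneg (t + 3*k^2)]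
    omega
  subst hk
  have hm0 : m = 0 := by nlinarith
  have hn0 : n = 0 := by nlinarith
  exact ⟨by omega, rfl⟩
end

section
/- If v₁, v₂, v₃ is a basis of ℤ³ such that all the squared Euclidean norms ‖vᵢ‖² are odd, then at most one of the ‖vᵢ‖² is congruent to 3 mod 4. -/
lemma sq_mod4_aux (a : ℤ) : (a % 2 = 0 ∧ a^2 % 4 = 0) ∨ (a % 2 = 1 ∧ a^2 % 4 = 1) := by
  rcases Int.emod_two_eq a with h | h
  · left
    refine ⟨h, ?_⟩
    obtain ⟨k, hk⟩ : (2:ℤ) ∣ a := Int.dvd_of_emod_eq_zero h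
    subst hk
    have : (2*k)^2 = 4*k^2 := by ring
    rw [this]
    exact Int.mul_emod_right 4 _
  · right
    refine ⟨h, ?_⟩
    obtain ⟨k, hk⟩ : ∃ k, a = 2*k+1 := ⟨a/2, by omega⟩
    subst hk
    have : (2*k+1)^2 = 1 + 4*(k^2+k) := by ring
    rw [this]
    simpa using Int.add_mul_emod_self_left (a := (1:ℤ)) (b := 4) (c := k^2+k)

lemma cast_one_of_odd (a : ℤ) (ha : a % 2 = 1) : (a : ZMod 2) = 1 := by
  have : (a : ZMod 2) = ((1:ℤ) : ZMod 2) :=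
    (ZMod.intCast_eq_intCast_iff a 1 2).mpr (by show a % 2 = 1 % 2; omega)
  simpa using this

/-- If v₁, v₂, v₃ is a basis of ℤ³ with all squared norms odd, then at most one
    of the squared norms is ≡ 3 mod 4. -/
theorem stmt2 (v : Fin 3 → Fin 3 → ℤ)
    (hdet : (Matrix.of fun i j => v j i).det = 1 ∨ (Matrix.of fun i j => v j i).det = -1)
    (hodd : ∀ i, Odd (∑ t, (v i t)^2)) :
    ∀ i j, (∑ t, (v i t)^2) % 4 = 3 → (∑ t, (v j t)^2) % 4 = 3 → i = j := by
  have odd3 : ∀ k, (∑ t, (v k t)^2) % 4 = 3 → ∀ t, v k t % 2 = 1 := by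
    intro k hk
    rw [Fin.sum_univ_three] at hk
    have h0 := sq_mod4_aux (v k 0)
    have h1 := sq_mod4_aux (v k 1)
    have h2 := sq_mod4_aux (v k 2)
    have key : v k 0 % 2 = 1 ∧ v k 1 % 2 = 1 ∧ v k 2 % 2 = 1 := by omega
    intro t
    fin_cases t
    · exact key.1
    · exact key.2.1
    · exact key.2.2
  intro i j hi hj
  by_contra hij
  set f : ℤ →+* ZMod 2 := Int.castRingHom (ZMod 2)
  set M2 : Matrix (Fin 3) (Fin 3) (ZMod 2) := Matrix.transpose ((Matrix.of fun i j => v j i).map f) with hM2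
  have hdet2 : M2.det = 1 := by
    rw [Matrix.det_transpose, ← RingHom.mapMatrix_apply, ← RingHom.map_det]
    rcases hdet with h | h <;> rw [h] <;> simp <;> decide
  have hrows : M2 i = M2 j := by
    funext t
    have : M2 i t = 1 := cast_one_of_odd _ (odd3 i hi t)
    have h2 : M2 j t = 1 := cast_one_of_odd _ (odd3 j hj t)
    rw [this, h2]
  have := Matrix.det_zero_of_row_eq hij hrows
  rw [hdet2] at this
  exact one_ne_zero this
end

section
/- Let n₁, n₂ be positive integers with n₁ ≡ n₂ ≡ 1 mod 4, and let q be a positive integer with q ≡ 3 mod 4. Then √q does not lie in the field ℚ(√n₁, √n₂). -/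
/-!
Adjoining a square root `s` of an element of a subfield `F` gives the subfield `{a + b s}`.
If some `x = a + b s` has `x² ∈ F` and `s ∉ F`, then the `s`-coefficient `2ab` of `x²`
vanishes, so `x ∈ F` or `x s ∈ F`. Applied twice, along `ℚ ⊆ ℚ(√n₁) ⊆ ℚ(√n₁)(√n₂)`, this makes `√q √m`
rational for some `m ∈ {1, n₁, n₂, n₁n₂}`; but then the integer `q m ≡ 3 mod 4` would be a
square.
-/

namespace Subfield

variable {K : Type*} [Field K]

def adjoinSqrt (F : Subfield K) (s : K) (hs : s ^ 2 ∈ F) : Subfield K where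
  carrier := {x | ∃ a ∈ F, ∃ b ∈ F, x = a + b * s}
  zero_mem' := ⟨0, F.zero_mem, 0, F.zero_mem, by simp⟩
  one_mem' := ⟨1, F.one_mem, 0, F.zero_mem, by simp⟩
  add_mem' := by
    rintro _ _ ⟨a, ha, b, hb, rfl⟩ ⟨c, hc, d, hd, rfl⟩
    exact ⟨a + c, F.add_mem ha hc, b + d, F.add_mem hb hd, by ring⟩
  neg_mem' := by
    rintro _ ⟨a, ha, b, hb, rfl⟩
    exact ⟨-a, F.neg_mem ha, -b, F.neg_mem hb, by ring⟩
  mul_mem' := by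
    rintro _ _ ⟨a, ha, b, hb, rfl⟩ ⟨c, hc, d, hd, rfl⟩
    refine ⟨a * c + b * d * s ^ 2, ?_, a * d + b * c, ?_, by ring⟩
    · exact F.add_mem (F.mul_mem ha hc) (F.mul_mem (F.mul_mem hb hd) hs)
    · exact F.add_mem (F.mul_mem ha hd) (F.mul_mem hb hc)
  inv_mem' := by
    rintro x ⟨a, ha, b, hb, rfl⟩
    by_cases hsF : s ∈ F
    · exact ⟨_, F.inv_mem (F.add_mem ha (F.mul_mem hb hsF)), 0, F.zero_mem, by simp⟩
    by_cases hx : a + b * s = 0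
    · exact ⟨0, F.zero_mem, 0, F.zero_mem, by simp [hx]⟩
    have hconj : a - b * s ≠ 0 := by
      intro h
      rcases eq_or_ne b 0 with rfl | hb0
      · exact hx (by simpa using h)
      · exact hsF (by
          rw [show s = a / b by field_simp; linear_combination -h]
          exact F.div_mem ha hb)
    have hD : a ^ 2 - b ^ 2 * s ^ 2 ≠ 0 := by
      rw [show a ^ 2 - b ^ 2 * s ^ 2 = (a + b * s) * (a - b * s) by ring]
      exact mul_ne_zero hx hconj
    have hDF : a ^ 2 - b ^ 2 * s ^ 2 ∈ F :=
      F.sub_mem (F.pow_mem ha 2) (F.mul_mem (F.pow_mem hb 2) hs)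
    refine ⟨a / (a ^ 2 - b ^ 2 * s ^ 2), F.div_mem ha hDF,
      -b / (a ^ 2 - b ^ 2 * s ^ 2), F.div_mem (F.neg_mem hb) hDF, ?_⟩
    field_simp
    ring

variable {F : Subfield K} {s : K} {hs : s ^ 2 ∈ F}

theorem le_adjoinSqrt : F ≤ F.adjoinSqrt s hs :=
  fun a ha ↦ ⟨a, ha, 0, F.zero_mem, by simp⟩

theorem mem_adjoinSqrt_self : s ∈ F.adjoinSqrt s hs :=
  ⟨0, F.zero_mem, 1, F.one_mem, by simp⟩

theorem mem_or_mul_mem_of_sq_mem_adjoinSqrt [NeZero (2 : K)] {x : K}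
    (hx : x ∈ F.adjoinSqrt s hs) (hx2 : x ^ 2 ∈ F) : x ∈ F ∨ x * s ∈ F := by
  obtain ⟨a, ha, b, hb, rfl⟩ := hx
  by_cases hsF : s ∈ F
  · exact Or.inl (F.add_mem ha (F.mul_mem hb hsF))
  have hab : a * b = 0 := by
    by_contra hab
    apply hsF
    have h2ab : 2 * (a * b) ≠ 0 := mul_ne_zero two_ne_zero hab
    rw [eq_div_of_mul_eq h2ab (by ring :
      s * (2 * (a * b)) = (a + b * s) ^ 2 - a ^ 2 - b ^ 2 * s ^ 2)]
    exact F.div_mem (F.sub_mem (F.sub_mem hx2 (F.pow_mem ha 2)) (F.mul_mem (F.pow_mem hb 2) hs))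
      (F.mul_mem (ofNat_mem F 2) (F.mul_mem ha hb))
  rcases mul_eq_zero.mp hab with rfl | rfl
  · exact Or.inr (by simpa [mul_assoc, ← sq] using F.mul_mem hb hs)
  · exact Or.inl (by simpa using ha)

end Subfield

theorem Nat.not_isSquare_of_mod_four_eq_three {k : ℕ} (hk : k % 4 = 3) : ¬IsSquare k := by
  rintro ⟨t, rfl⟩
  have := Nat.mul_mod t t 4
  have : t % 4 < 4 := Nat.mod_lt t (by norm_num)
  interval_cases t % 4 <;> omega

section CharZero

variable {K : Type*} [Field K] [CharZero K]

theorem notMem_bot_of_sq_eq_of_mod_four_eq_three {k : ℕ} (hk : k % 4 = 3) {y : K}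
    (hy : y ^ 2 = k) : y ∉ (⊥ : Subfield K) := by
  rw [Subfield.bot_eq_of_charZero]
  rintro ⟨r, rfl⟩
  apply Nat.not_isSquare_of_mod_four_eq_three hk
  rw [← Rat.isSquare_natCast_iff]
  exact ⟨r, by exact_mod_cast (by simpa [sq] using hy.symm : (k : K) = (r * r : ℚ))⟩

theorem notMem_adjoinSqrt_bot_of_mod_four {k m : ℕ} (hk : k % 4 = 3) (hm : m % 4 = 1)
    {s y : K} (hs : s ^ 2 = m) (hy : y ^ 2 = k) :
    y ∉ (⊥ : Subfield K).adjoinSqrt s (hs ▸ natCast_mem ⊥ m) := by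
  intro hmem
  rcases Subfield.mem_or_mul_mem_of_sq_mem_adjoinSqrt hmem (hy ▸ natCast_mem ⊥ k) with h | h
  · exact notMem_bot_of_sq_eq_of_mod_four_eq_three hk hy h
  · refine notMem_bot_of_sq_eq_of_mod_four_eq_three (k := k * m) ?_ ?_ h
    · rw [Nat.mul_mod, hk, hm]
    · rw [mul_pow, hy, hs]; push_cast; ring

end CharZero

theorem stmt8_general (n₁ n₂ q : ℕ)
    (h₁ : n₁ % 4 = 1) (h₂ : n₂ % 4 = 1) (h₃ : q % 4 = 3) :
    Real.sqrt q ∉ Subfield.closure ({Real.sqrt n₁, Real.sqrt n₂} : Set ℝ) := by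
  have sq_sqrt (n : ℕ) : Real.sqrt n ^ 2 = n := Real.sq_sqrt n.cast_nonneg
  have sq_sqrt_mem (F : Subfield ℝ) (n : ℕ) : Real.sqrt n ^ 2 ∈ F :=
    (sq_sqrt n).symm ▸ natCast_mem F n
  set F₁ := (⊥ : Subfield ℝ).adjoinSqrt _ (sq_sqrt_mem ⊥ n₁)
  have hle : Subfield.closure {Real.sqrt n₁, Real.sqrt n₂} ≤
      F₁.adjoinSqrt _ (sq_sqrt_mem F₁ n₂) := by
    rw [Subfield.closure_le, Set.insert_subset_iff, Set.singleton_subset_iff]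
    exact ⟨Subfield.le_adjoinSqrt Subfield.mem_adjoinSqrt_self, Subfield.mem_adjoinSqrt_self⟩
  intro hq
  rcases Subfield.mem_or_mul_mem_of_sq_mem_adjoinSqrt (hle hq) (sq_sqrt_mem F₁ q) with h | h
  · exact notMem_adjoinSqrt_bot_of_mod_four h₃ h₁ (sq_sqrt n₁) (sq_sqrt q) h
  · refine notMem_adjoinSqrt_bot_of_mod_four (k := q * n₂) ?_ h₁ (sq_sqrt n₁) ?_ h
    · rw [Nat.mul_mod, h₃, h₂]
    · rw [mul_pow, sq_sqrt, sq_sqrt]; push_cast; ring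

/-- If n₁ ≡ n₂ ≡ 1 mod 4 are positive integers and q ≡ 3 mod 4 is a positive
    integer, then √q ∉ ℚ(√n₁, √n₂). -/
theorem stmt8 (n₁ n₂ q : ℕ) (hn₁ : 0 < n₁) (hn₂ : 0 < n₂) (hq : 0 < q)
    (h₁ : n₁ % 4 = 1) (h₂ : n₂ % 4 = 1) (h₃ : q % 4 = 3) :
    Real.sqrt q ∉ Subfield.closure ({Real.sqrt n₁, Real.sqrt n₂} : Set ℝ) :=
  stmt8_general n₁ n₂ q h₁ h₂ h₃
end

section
/- The system of equations (2x+y)² / (3y²−4y+2) = (x+2y)² / (3x²−4x+2) with x, y ∈ ℤ implies x + y ∈ {0, 1}; moreover x + y = 1 is impossible, so x + y = 0. -/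
/-- If x, y ∈ ℤ satisfy (2x+y)/√(3y²−4y+2) = −(x+2y)/√(3x²−4x+2), then
    (squaring) x+y ∈ {0,1}, x+y = 1 is impossible, and hence x+y = 0. -/
theorem stmt15 (x y : ℤ)
    (h : (2 * (x : ℝ) + y) / Real.sqrt (3 * (y : ℝ)^2 - 4 * y + 2)
       = -(((x : ℝ) + 2 * y) / Real.sqrt (3 * (x : ℝ)^2 - 4 * x + 2))) :
    (x + y = 0 ∨ x + y = 1) ∧ x + y ≠ 1 ∧ x + y = 0 := by
  have hA : (0:ℝ) < 3 * (y : ℝ)^2 - 4 * y + 2 := by nlinarith [sq_nonneg (3*(y:ℝ)-2)]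
  have hB : (0:ℝ) < 3 * (x : ℝ)^2 - 4 * x + 2 := by nlinarith [sq_nonneg (3*(x:ℝ)-2)]
  have hsA : 0 < Real.sqrt (3 * (y : ℝ)^2 - 4 * y + 2) := Real.sqrt_pos.mpr hA
  have hsB : 0 < Real.sqrt (3 * (x : ℝ)^2 - 4 * x + 2) := Real.sqrt_pos.mpr hB
  have eA : Real.sqrt (3 * (y : ℝ)^2 - 4 * y + 2) ^ 2 = 3 * (y : ℝ)^2 - 4 * y + 2 :=
    Real.sq_sqrt hA.le
  have eB : Real.sqrt (3 * (x : ℝ)^2 - 4 * x + 2) ^ 2 = 3 * (x : ℝ)^2 - 4 * x + 2 :=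
    Real.sq_sqrt hB.le
  set sA := Real.sqrt (3 * (y : ℝ)^2 - 4 * y + 2) with hsAdef
  set sB := Real.sqrt (3 * (x : ℝ)^2 - 4 * x + 2) with hsBdef
  have h' : (2 * (x:ℝ) + y) * sB = -(((x:ℝ) + 2 * y) * sA) := by
    field_simp at h
    linarith [h]
  -- sign fact
  have hS : (2 * (x:ℝ) + y) * ((x:ℝ) + 2 * y) ≤ 0 := by
    have key : (2 * (x:ℝ) + y) * ((x:ℝ) + 2 * y) * (sA * sB) = -(((x:ℝ) + 2 * y) * sA)^2 := by
      linear_combination (((x:ℝ) + 2 * y) * sA) * h'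
    nlinarith [key, mul_pos hsA hsB, sq_nonneg (((x:ℝ) + 2 * y) * sA)]
  -- squared equation
  have hsq : (2 * (x:ℝ) + y)^2 * (3 * (x:ℝ)^2 - 4 * x + 2)
      = ((x:ℝ) + 2 * y)^2 * (3 * (y:ℝ)^2 - 4 * y + 2) := by
    have h2 : ((2 * (x:ℝ) + y) * sB)^2 = (-(((x:ℝ) + 2 * y) * sA))^2 := by rw [h']
    linear_combination h2 - (2 * (x:ℝ) + y)^2 * eB + ((x:ℝ) + 2 * y)^2 * eA
  have hZ1 : (2*x+y)^2 * (3*x^2-4*x+2) = (x+2*y)^2 * (3*y^2-4*y+2) := by exact_mod_cast hsq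
  have hZ2 : (2*x+y) * (x+2*y) ≤ 0 := by exact_mod_cast hS
  have hxy : x*y + 2*(x+y)^2 ≤ 0 := by nlinarith [hZ2]
  have hs0 : x + y = 0 := by
    rcases eq_or_ne x y with rfl | hne
    · have hx2 : x * x = 0 := le_antisymm (by nlinarith [hZ2]) (mul_self_nonneg x)
      have : x = 0 := by exact mul_self_eq_zero.mp hx2
      omega
    · have hfac : (x - y) * (12*(x+y)^3 - 16*(x+y)^2 + 6*(x+y) - 4*(x*y)*(3*(x+y)-1)) = 0 := by
        linear_combination hZ1
      have hQ : 12*(x+y)^3 - 16*(x+y)^2 + 6*(x+y) - 4*(x*y)*(3*(x+y)-1) = 0 := by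
        rcases mul_eq_zero.mp hfac with h0 | h0
        · omega
        · exact h0
      by_contra hc
      have hs : x + y ≥ 1 ∨ x + y ≤ -1 := by omega
      rcases hs with hs | hs
      · nlinarith [hQ, hxy, hs, mul_nonneg (by nlinarith : (0:ℤ) ≤ -(x*y + 2*(x+y)^2)) (by linarith : (0:ℤ) ≤ 3*(x+y) - 1), sq_nonneg (x+y), mul_pos (by linarith : (0:ℤ) < x+y) (by nlinarith [sq_nonneg (3*(x+y)-1)] : (0:ℤ) < 6*(x+y)^2 - 4*(x+y) + 1)]
      · nlinarith [hQ, hxy, hs, mul_nonneg (by nlinarith : (0:ℤ) ≤ -(x*y + 2*(x+y)^2)) (by linarith : (0:ℤ) ≤ -(3*(x+y) - 1)), mul_pos (by linarith : (0:ℤ) < -(x+y)) (by nlinarith [sq_nonneg (3*(x+y)-1)] : (0:ℤ) < 6*(x+y)^2 - 4*(x+y) + 1)]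
  exact ⟨Or.inl hs0, by omega, hs0⟩
end
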